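/- Assume the Bethe equations (B1_j) for j = 1,…,m₁ and (B0_j) for j = 1,…,m₀ hold. Then for every z ∈ ℂ with z ≠ 0, z ≠ w¹_j (all j) and z ≠ w⁰_j (all j), one has u(z)² + u′(z) = χ² + ρ₀/z + ℓ(ℓ+1)/z² + Σ_{j=1}^{m₀} [ 2/(z−w⁰_j)² + (k/w⁰_j)/(z−w⁰_j) ], where ρ₀ = 2ℓ·( χ + Σ_{j=1}^{m₁} 1/w¹_j − Σ_{j=1}^{m₀} 1/w⁰_j ) and u′(z) = ℓ/z² − Σ_{j=1}^{m₁} 1/(z−w¹_j)² + Σ_{j=1}^{m₀} 1/(z−w⁰_j)². In particular, u² + u′ has no poles at the points w¹_j. -/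

import Mathlib

/-!
Write `u(z) = -χ + Σᵢ cᵢ / (z - aᵢ)` as a sum over the poles `a = 0, w¹_j, w⁰_j` with charges
`c = -ℓ, 1, -1`, so that `u′(z) = -Σᵢ cᵢ / (z - aᵢ)²`. Expanding the square by partial fractions,
`u² + u′ = χ² + Σᵢ (cᵢ² - cᵢ) / (z - aᵢ)² + Σᵢ 2cᵢ (Σ_{s ≠ i} c_s / (aᵢ - a_s) - χ) / (z - aᵢ)`.
The double-pole coefficient `cᵢ² - cᵢ` vanishes for the charge `1`, and the Bethe equations say
exactly that the residue vanishes at each `w¹_j` and equals `k / w⁰_j` at each `w⁰_j`.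
-/

open Finset

/-- `u(z) = -χ - ℓ/z + Σ_j 1/(z - w¹_j) - Σ_j 1/(z - w⁰_j)`. -/
noncomputable def uFun (χ ℓ : ℂ) {m₁ m₀ : ℕ} (w1 : Fin m₁ → ℂ) (w0 : Fin m₀ → ℂ)
    (z : ℂ) : ℂ :=
  -χ - ℓ / z + ∑ j, 1 / (z - w1 j) - ∑ j, 1 / (z - w0 j)

/-- `u′(z) = ℓ/z² - Σ_j 1/(z - w¹_j)² + Σ_j 1/(z - w⁰_j)²`. -/
noncomputable def uFun' (ℓ : ℂ) {m₁ m₀ : ℕ} (w1 : Fin m₁ → ℂ) (w0 : Fin m₀ → ℂ)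
    (z : ℂ) : ℂ :=
  ℓ / z ^ 2 - ∑ j, 1 / (z - w1 j) ^ 2 + ∑ j, 1 / (z - w0 j) ^ 2

section PartialFractions

variable {K ι : Type*} [Field K] [Fintype ι]

theorem div_sub_mul_div_sub_of_ne {z a b : K} (c d : K) (hab : a ≠ b) (ha : z ≠ a)
    (hb : z ≠ b) :
    c / (z - a) * (d / (z - b)) = c / (z - a) * (d / (a - b)) + d / (z - b) * (c / (b - a)) := by
  have := sub_ne_zero.2 ha; have := sub_ne_zero.2 hb
  have := sub_ne_zero.2 hab; have := sub_ne_zero.2 hab.symm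
  field_simp
  ring

/- The inner sums run over all `s`, the term `s = i` being `c i / 0 = 0`; so they are the sums
over `s ≠ i`. -/
theorem sq_sum_div_sub {a : ι → K} (ha : Function.Injective a) (c : ι → K) {z : K}
    (hz : ∀ i, z ≠ a i) :
    (∑ i, c i / (z - a i)) ^ 2
      = ∑ i, c i ^ 2 / (z - a i) ^ 2 + 2 * ∑ i, c i / (z - a i) * ∑ s, c s / (a i - a s) := by
  classical
  have hpair : ∀ i s, c i / (z - a i) * (c s / (z - a s))
      = (if i = s then c i ^ 2 / (z - a i) ^ 2 else 0)
        + (c i / (z - a i) * (c s / (a i - a s)) + c s / (z - a s) * (c i / (a s - a i))) := by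
    intro i s
    by_cases his : i = s
    · subst his
      simp only [if_pos, sub_self, div_zero, mul_zero, add_zero, sq, div_mul_div_comm]
    · rw [if_neg his, zero_add]
      exact div_sub_mul_div_sub_of_ne _ _ (ha.ne his) (hz i) (hz s)
  simp_rw [sq (∑ i, _), Fintype.sum_mul_sum, hpair, sum_add_distrib, sum_ite_eq, mem_univ,
    if_true]
  rw [sum_comm (f := fun i s => c s / (z - a s) * (c i / (a s - a i))), two_mul]
  simp only [mul_sum]

theorem sq_sub_sum_div_sub_sq_eq {a : ι → K} (ha : Function.Injective a) (c : ι → K) (χ : K)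
    {z : K} (hz : ∀ i, z ≠ a i) :
    (-χ + ∑ i, c i / (z - a i)) ^ 2 - ∑ i, c i / (z - a i) ^ 2
      = χ ^ 2 + ∑ i, (c i ^ 2 - c i) / (z - a i) ^ 2
        + ∑ i, 2 * c i * (∑ s, c s / (a i - a s) - χ) / (z - a i) := by
  have hdouble : ∑ i, (c i ^ 2 - c i) / (z - a i) ^ 2
      = ∑ i, c i ^ 2 / (z - a i) ^ 2 - ∑ i, c i / (z - a i) ^ 2 := by
    rw [← sum_sub_distrib]
    simp only [sub_div]
  have hsimple : ∑ i, 2 * c i * (∑ s, c s / (a i - a s) - χ) / (z - a i)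
      = 2 * ∑ i, c i / (z - a i) * ∑ s, c s / (a i - a s) - 2 * χ * ∑ i, c i / (z - a i) := by
    rw [mul_sum, mul_sum, ← sum_sub_distrib]
    refine sum_congr rfl fun i _ => ?_
    ring
  rw [hdouble, hsimple]
  linear_combination sq_sum_div_sub ha c hz

end PartialFractions

namespace Bethe

variable {K : Type*} [Field K] {m₁ m₀ : ℕ}

def site (w1 : Fin m₁ → K) (w0 : Fin m₀ → K) : Option (Fin m₁ ⊕ Fin m₀) → K
  | none => 0
  | some (.inl j) => w1 j
  | some (.inr j) => w0 j

def charge (ℓ : K) : Option (Fin m₁ ⊕ Fin m₀) → K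
  | none => -ℓ
  | some (.inl _) => 1
  | some (.inr _) => -1

theorem site_injective {w1 : Fin m₁ → K} {w0 : Fin m₀ → K} (hw1 : ∀ j, w1 j ≠ 0)
    (hw0 : ∀ j, w0 j ≠ 0) (hw1inj : Function.Injective w1) (hw0inj : Function.Injective w0)
    (hdisj : ∀ i j, w1 i ≠ w0 j) : Function.Injective (site w1 w0) := by
  rintro (_ | i | i) (_ | j | j) h <;>
    first
    | exact (hdisj j i h.symm).elim
    | simp_all [site, hw1inj.eq_iff, hw0inj.eq_iff, eq_comm (a := (0 : K))]

theorem sum_charge_div (ℓ : K) (w1 : Fin m₁ → K) (w0 : Fin m₀ → K) (g : K → K) :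
    ∑ s, charge ℓ s / g (site w1 w0 s) = -ℓ / g 0 + ∑ s, 1 / g (w1 s) - ∑ s, 1 / g (w0 s) := by
  rw [Fintype.sum_option, Fintype.sum_sum_type]
  simp only [charge, site, neg_div, sum_neg_distrib]
  ring

theorem sum_charge_div_site_none_sub (ℓ : K) (w1 : Fin m₁ → K) (w0 : Fin m₀ → K) :
    ∑ s, charge ℓ s / (site w1 w0 none - site w1 w0 s) = -∑ s, 1 / w1 s + ∑ s, 1 / w0 s := by
  rw [sum_charge_div ℓ w1 w0 (site w1 w0 none - ·)]
  simp [site, div_neg, sum_neg_distrib]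

theorem sum_charge_div_site_inl_sub {χ ℓ : K} {w1 : Fin m₁ → K} {w0 : Fin m₀ → K} (j : Fin m₁)
    (hB1 : ℓ / w1 j - ∑ s ∈ univ.erase j, 1 / (w1 j - w1 s) + ∑ s, 1 / (w1 j - w0 s) + χ = 0) :
    ∑ s, charge ℓ s / (site w1 w0 (some (.inl j)) - site w1 w0 s) = χ := by
  rw [sum_charge_div ℓ w1 w0 (site w1 w0 (some (.inl j)) - ·)]
  rw [sum_erase univ (f := fun s => 1 / (w1 j - w1 s)) (by simp)] at hB1
  simp only [site, sub_zero]
  linear_combination -hB1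

theorem sum_charge_div_site_inr_sub {χ ℓ k : K} {w1 : Fin m₁ → K} {w0 : Fin m₀ → K}
    (j : Fin m₀)
    (hB0 : (k / 2 - ℓ) / w0 j + ∑ s, 1 / (w0 j - w1 s) - ∑ s ∈ univ.erase j, 1 / (w0 j - w0 s)
      - χ = 0) :
    ∑ s, charge ℓ s / (site w1 w0 (some (.inr j)) - site w1 w0 s) = χ - k / 2 / w0 j := by
  rw [sum_charge_div ℓ w1 w0 (site w1 w0 (some (.inr j)) - ·)]
  rw [sum_erase univ (f := fun s => 1 / (w0 j - w0 s)) (by simp)] at hB0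
  simp only [site, sub_zero]
  linear_combination hB0

end Bethe

theorem uFun_eq_neg_add_sum_charge_div (χ ℓ : ℂ) {m₁ m₀ : ℕ} (w1 : Fin m₁ → ℂ)
    (w0 : Fin m₀ → ℂ) (z : ℂ) :
    uFun χ ℓ w1 w0 z = -χ + ∑ s, Bethe.charge ℓ s / (z - Bethe.site w1 w0 s) := by
  rw [Bethe.sum_charge_div ℓ w1 w0 (z - ·), uFun]
  simp only [sub_zero]
  ring

theorem uFun'_eq_neg_sum_charge_div_sq (ℓ : ℂ) {m₁ m₀ : ℕ} (w1 : Fin m₁ → ℂ)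
    (w0 : Fin m₀ → ℂ) (z : ℂ) :
    uFun' ℓ w1 w0 z = -∑ s, Bethe.charge ℓ s / (z - Bethe.site w1 w0 s) ^ 2 := by
  rw [Bethe.sum_charge_div ℓ w1 w0 (fun y => (z - y) ^ 2), uFun']
  simp only [sub_zero]
  ring

theorem miura_global_of_bethe (χ ℓ k : ℂ) (m₁ m₀ : ℕ)
    (w1 : Fin m₁ → ℂ) (w0 : Fin m₀ → ℂ)
    (hw1 : ∀ j, w1 j ≠ 0) (hw0 : ∀ j, w0 j ≠ 0)
    (hw1inj : Function.Injective w1) (hw0inj : Function.Injective w0)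
    (hdisj : ∀ i j, w1 i ≠ w0 j)
    (hB1 : ∀ j, ℓ / w1 j - ∑ s ∈ univ.erase j, 1 / (w1 j - w1 s)
      + ∑ s, 1 / (w1 j - w0 s) + χ = 0)
    (hB0 : ∀ j, (k / 2 - ℓ) / w0 j + ∑ s, 1 / (w0 j - w1 s)
      - ∑ s ∈ univ.erase j, 1 / (w0 j - w0 s) - χ = 0) :
    ∀ z : ℂ, z ≠ 0 → (∀ j, z ≠ w1 j) → (∀ j, z ≠ w0 j) →
      (uFun χ ℓ w1 w0 z) ^ 2 + uFun' ℓ w1 w0 z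
        = χ ^ 2 + (2 * ℓ * (χ + ∑ j, 1 / w1 j - ∑ j, 1 / w0 j)) / z
          + ℓ * (ℓ + 1) / z ^ 2
          + ∑ j, (2 / (z - w0 j) ^ 2 + (k / w0 j) / (z - w0 j)) := by
  intro z hz hz1 hz0
  have hsite : ∀ i, z ≠ Bethe.site w1 w0 i := by
    rintro (_ | j | j)
    exacts [hz, hz1 j, hz0 j]
  rw [uFun_eq_neg_add_sum_charge_div, uFun'_eq_neg_sum_charge_div_sq, ← sub_eq_add_neg,
    sq_sub_sum_div_sub_sq_eq (Bethe.site_injective hw1 hw0 hw1inj hw0inj hdisj) _ _ hsite,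
    Fintype.sum_option, Fintype.sum_sum_type, Fintype.sum_option, Fintype.sum_sum_type]
  simp only [Bethe.sum_charge_div_site_none_sub, Bethe.sum_charge_div_site_inl_sub _ (hB1 _),
    Bethe.sum_charge_div_site_inr_sub _ (hB0 _)]
  simp only [Bethe.site, Bethe.charge, one_pow, sub_self, mul_zero, zero_div, sum_const_zero,
    sub_zero]
  have hw0_poles : ∀ j, ((-1) ^ 2 - -1) / (z - w0 j) ^ 2
      + 2 * -1 * (χ - k / 2 / w0 j - χ) / (z - w0 j)
      = 2 / (z - w0 j) ^ 2 + k / w0 j / (z - w0 j) := fun j => by ring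
  rw [← sum_congr rfl fun j _ => hw0_poles j, sum_add_distrib]
  ring
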